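/- arXiv:1202.4902 — 5 statements merged into one kernel-verified Lean document; each statement's English description precedes it below -/
import Mathlib

section
/- Multidimensional Brown's lemma: For every finite coloring of the integer lattice ℤⁿ (i.e., every map c : ℤⁿ → Fin r for some r), there exist q ∈ ℕ and a color i such that for every finite subset F ⊆ ℤⁿ and every k ∈ ℕ, there exist t ∈ ℤⁿ and, for each P ∈ F, a vector v_P ∈ Q_qⁿ, such that c(k·P + t + v_P) = i for all P ∈ F. -/
/-- Some color class is "piecewise syndetic": there is a gap `q` and a color `i`
such that for every `N` some translate of the cube of radius `N` is covered by
`q`-neighborhoods of points of color `i`. -/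
lemma brown_key (n r : ℕ) (c : (Fin n → ℤ) → Fin r) :
    ∃ (q : ℕ) (i : Fin r), ∀ N : ℕ, ∃ t : Fin n → ℤ,
      ∀ P : Fin n → ℤ, (∀ j, |P j| ≤ (N : ℤ)) →
        ∃ v : Fin n → ℤ, (∀ j, |v j| ≤ (q : ℤ)) ∧ c (P + t + v) = i := by
  by_contra h
  push_neg at h
  -- h : ∀ q i, ∃ N, ∀ t, ∃ P, (∀ j, |P j| ≤ N) ∧ ∀ v, (∀ j, |v j| ≤ q) → c (P+t+v) ≠ i
  have main : ∀ m, m ≤ r → ∃ Q : ℕ, ∀ t : Fin n → ℤ, ∃ z : Fin n → ℤ,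
      (∀ j, |z j - t j| ≤ (Q : ℤ)) ∧ ∀ i : Fin r, (i : ℕ) < m → c z ≠ i := by
    intro m
    induction m with
    | zero =>
      intro _
      exact ⟨0, fun t => ⟨t, by simp, fun i hi => absurd hi (by omega)⟩⟩
    | succ m ih =>
      intro hm
      obtain ⟨Q, hQ⟩ := ih (Nat.le_of_succ_le hm)
      obtain ⟨N, hN⟩ := h Q ⟨m, hm⟩
      refine ⟨N + Q, fun t => ?_⟩
      obtain ⟨P, hP, hPc⟩ := hN t
      obtain ⟨z, hz, hzc⟩ := hQ (P + t)
      refine ⟨z, fun j => ?_, fun i hi => ?_⟩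
      · have h1 : |z j - t j| ≤ |z j - (P + t) j| + |(P + t) j - t j| := abs_sub_le _ _ _
        have h2 : |(P + t) j - t j| = |P j| := by simp
        have := hz j
        have := hP j
        push_cast
        rw [h2] at h1
        linarith
      · rcases Nat.lt_succ_iff_lt_or_eq.mp hi with h' | h'
        · exact hzc i h'
        · have hv : ∀ j, |(z - (P + t)) j| ≤ (Q : ℤ) := fun j => by
            simpa [sub_eq_add_neg, add_comm, add_left_comm, add_assoc] using hz j
          have := hPc (z - (P + t)) hv
          have heq : P + t + (z - (P + t)) = z := by abel
          rw [heq] at this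
          have hieq : i = ⟨m, hm⟩ := Fin.ext h'
          rw [hieq]
          exact this
  obtain ⟨Q, hQ⟩ := main r le_rfl
  obtain ⟨z, _, hz⟩ := hQ 0
  exact hz (c z) (c z).isLt rfl

/-- **Multidimensional Brown's lemma.** For every finite coloring `c : ℤⁿ → Fin r`,
there exist `q ∈ ℕ` and a color `i` such that for every finite subset `F ⊆ ℤⁿ` and
every `k ∈ ℕ`, there exist `t ∈ ℤⁿ` and, for each `P ∈ F`, a vector `v P` in the cube
`Q_qⁿ = {u : ∀ j, |u j| ≤ q}`, such that `c (k • P + t + v P) = i` for all `P ∈ F`. -/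
theorem multidimensional_brown (n r : ℕ) (c : (Fin n → ℤ) → Fin r) :
    ∃ (q : ℕ) (i : Fin r),
      ∀ (F : Finset (Fin n → ℤ)) (k : ℕ),
        ∃ (t : Fin n → ℤ) (v : (Fin n → ℤ) → (Fin n → ℤ)),
          ∀ P ∈ F, (∀ j, |v P j| ≤ (q : ℤ)) ∧ c ((k : ℤ) • P + t + v P) = i := by
  classical
  obtain ⟨q, i, hqi⟩ := brown_key n r c
  refine ⟨q, i, fun F k => ?_⟩
  set M : ℕ := F.sup fun P => Finset.univ.sup fun j => (P j).natAbs with hM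
  have hbound : ∀ P ∈ F, ∀ j, |((k : ℤ) • P) j| ≤ ((k * M : ℕ) : ℤ) := by
    intro P hP j
    have h0 : (P j).natAbs ≤ Finset.univ.sup fun j => (P j).natAbs :=
      Finset.le_sup (f := fun j => (P j).natAbs) (Finset.mem_univ j)
    have h1' : (Finset.univ.sup fun j => (P j).natAbs) ≤ M :=
      Finset.le_sup (f := fun P => Finset.univ.sup fun j => (P j).natAbs) hP
    have h1 : (P j).natAbs ≤ M := le_trans h0 h1'
    have h2 : |P j| ≤ (M : ℤ) := by
      rw [Int.abs_eq_natAbs]; exact_mod_cast h1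
    have h3 : |((k : ℤ) • P) j| = (k : ℤ) * |P j| := by
      simp [abs_mul, abs_of_nonneg (show (0:ℤ) ≤ (k:ℤ) by positivity)]
    rw [h3]
    push_cast
    have : (0:ℤ) ≤ (k:ℤ) := by positivity
    nlinarith [abs_nonneg (P j)]
  obtain ⟨t, ht⟩ := hqi (k * M)
  have hv : ∀ P : Fin n → ℤ, ∃ v : Fin n → ℤ,
      P ∈ F → (∀ j, |v j| ≤ (q : ℤ)) ∧ c ((k : ℤ) • P + t + v) = i := by
    intro P
    by_cases hP : P ∈ F
    · obtain ⟨v, hv1, hv2⟩ := ht ((k : ℤ) • P) (hbound P hP)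
      exact ⟨v, fun _ => ⟨hv1, hv2⟩⟩
    · exact ⟨0, fun h => absurd h hP⟩
  choose v hv using hv
  exact ⟨t, v, fun P hP => hv P hP⟩
end

section
/- Topological dynamics multidimensional Brown's lemma: Let (X,d) be a compact metric space and T₁,…,T_l pairwise commuting homeomorphisms of X. Given ε > 0, there exists q ∈ ℕ such that for each k ∈ ℕ there exist a point x_k ∈ X and, for each i ∈ {1,…,l}, integers u^i_1,…,u^i_l with |u^i_j| ≤ q for all j, satisfying d(x_k, T_i^k(T_1^{u^i_1}(⋯(T_l^{u^i_l}(x_k))⋯))) < ε for all i ∈ {1,…,l}; moreover the points x_k can be chosen so that d(x_k, x_{k'}) < ε for all k, k' ∈ ℕ. -/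
/-!
Let `ℤˡ` act on `X` by `v ↦ T 0 ^ v 0 * ⋯ * T (l - 1) ^ v (l - 1)`. By Zorn's lemma and
compactness there is a minimal subsystem `Y`, and every orbit is dense in `Y`. Covering the
compact set `Y` by the preimages of the `ε`-ball around a fixed `y₀ ∈ Y` gives finitely many
group elements, one of which brings any point of `Y` back to that ball (uniform recurrence).
Applied to `T i ^ k y₀ ∈ Y` this yields corrections `u i` whose entries are bounded
independently of `k`, with `x k := y₀` for every `k`.
-/

open Set
open scoped Pointwise

section CommutingPowers

variable {G : Type*} [Group G]

theorem List.prod_ofFn_zpow_add {n : ℕ} {T : Fin n → G} (hT : ∀ i j, Commute (T i) (T j))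
    (v w : Fin n → ℤ) :
    (List.ofFn fun j => T j ^ (v j + w j)).prod
      = (List.ofFn fun j => T j ^ v j).prod * (List.ofFn fun j => T j ^ w j).prod := by
  induction n with
  | zero => simp
  | succ n ih =>
    simp only [List.ofFn_succ, List.prod_cons]
    rw [zpow_add, ih (T := fun j => T j.succ) (fun i j => hT _ _) (fun j => v j.succ)
      (fun j => w j.succ)]
    have hcomm : Commute (T 0 ^ w 0) (List.ofFn fun j : Fin n => T j.succ ^ v j.succ).prod :=
      Commute.list_prod_right _ _ fun x hx => by
        obtain ⟨j, rfl⟩ := List.mem_ofFn.1 hx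
        exact (hT 0 j.succ).zpow_zpow _ _
    exact hcomm.mul_mul_mul_comm _ _

theorem List.prod_ofFn_eq_of_forall_ne {M : Type*} [Monoid M] {n : ℕ} (f : Fin n → M)
    (i : Fin n) (hf : ∀ j, j ≠ i → f j = 1) : (List.ofFn f).prod = f i := by
  induction n with
  | zero => exact i.elim0
  | succ n ih =>
    rw [List.ofFn_succ, List.prod_cons]
    rcases i.eq_zero_or_eq_succ with rfl | ⟨i, rfl⟩
    · rw [List.prod_eq_one, mul_one]
      intro x hx
      obtain ⟨j, rfl⟩ := List.mem_ofFn.1 hx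
      exact hf j.succ j.succ_ne_zero
    · rw [hf 0 i.succ_ne_zero.symm, one_mul]
      exact ih _ i fun j hj => hf j.succ (Fin.succ_injective _ |>.ne hj)

def zpowProdHom {n : ℕ} {T : Fin n → G} (hT : ∀ i j, Commute (T i) (T j)) :
    Multiplicative (Fin n → ℤ) →* G where
  toFun v := (List.ofFn fun j => T j ^ v.toAdd j).prod
  map_one' := by simp
  map_mul' v w := List.prod_ofFn_zpow_add hT v.toAdd w.toAdd

variable {n : ℕ} {T : Fin n → G} (hT : ∀ i j, Commute (T i) (T j))

theorem zpowProdHom_ofAdd_single (i : Fin n) (k : ℤ) :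
    zpowProdHom hT (.ofAdd (Pi.single i k)) = T i ^ k := by
  change (List.ofFn _).prod = _
  rw [List.prod_ofFn_eq_of_forall_ne _ i fun j hj => by simp [hj]]
  simp

theorem zpowProdHom_mem {H : Subgroup G} (hTH : ∀ i, T i ∈ H)
    (v : Multiplicative (Fin n → ℤ)) : zpowProdHom hT v ∈ H :=
  H.list_prod_mem fun _ hσ => by
    obtain ⟨j, rfl⟩ := List.mem_ofFn.1 hσ
    exact zpow_mem (hTH j) _

end CommutingPowers

def homeomorphSubgroup (X : Type*) [TopologicalSpace X] : Subgroup (Equiv.Perm X) where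
  carrier := {σ | Continuous σ ∧ Continuous σ.symm}
  mul_mem' hσ hτ := ⟨hσ.1.comp hτ.1, hτ.2.comp hσ.2⟩
  one_mem' := ⟨continuous_id, continuous_id⟩
  inv_mem' hσ := ⟨hσ.2, hσ.1⟩

theorem Finset.exists_forall_abs_apply_le {α ι : Type*} [Fintype ι] (s : Finset α)
    (f : α → ι → ℤ) : ∃ q : ℕ, ∀ a ∈ s, ∀ j, |f a j| ≤ q := by
  refine ⟨s.sup fun a => univ.sup fun j => (f a j).natAbs, fun a ha j => ?_⟩
  rw [Int.abs_eq_natAbs, Nat.cast_le]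
  exact (le_sup (f := fun j => (f a j).natAbs) (mem_univ j)).trans
    (le_sup (f := fun a => univ.sup fun j => (f a j).natAbs) ha)

section MinimalSubsystem

variable (M : Type*) {X : Type*} [Monoid M] [MulAction M X] [TopologicalSpace X]

def IsSubsystem (Y : Set X) : Prop := Y.Nonempty ∧ IsClosed Y ∧ ∀ c : M, c • Y ⊆ Y

theorem exists_minimal_isSubsystem [CompactSpace X] [Nonempty X] :
    ∃ Y : Set X, Minimal (IsSubsystem M) Y := by
  have hchain : ∀ C ⊆ {Y : Set X | IsSubsystem M Y}, IsChain (· ⊆ ·) C → C.Nonempty →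
      ∃ Z ∈ {Y : Set X | IsSubsystem M Y}, ∀ Y ∈ C, Z ⊆ Y := by
    intro C hC hchain hCne
    have := hCne.to_subtype
    have hdirected : DirectedOn (· ⊇ ·) C := fun Y hY Z hZ =>
      (hchain.total hY hZ).elim (fun h => ⟨Y, hY, subset_rfl, h⟩) fun h => ⟨Z, hZ, h, subset_rfl⟩
    have hnonempty : (⋂₀ C).Nonempty :=
      IsCompact.nonempty_sInter_of_directed_nonempty_isCompact_isClosed hdirected
        (fun Y hY => (hC hY).1) (fun Y hY => (hC hY).2.1.isCompact) fun Y hY => (hC hY).2.1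
    refine ⟨⋂₀ C, ⟨hnonempty, isClosed_sInter fun Y hY => (hC hY).2.1, fun c => ?_⟩,
      fun Y => sInter_subset_of_mem⟩
    exact subset_sInter fun Y hY =>
      (smul_set_mono (sInter_subset_of_mem hY)).trans ((hC hY).2.2 c)
  obtain ⟨Y, -, hY⟩ := zorn_superset_nonempty _ hchain univ
    ⟨univ_nonempty, isClosed_univ, fun _ => subset_univ _⟩
  exact ⟨Y, hY⟩

variable {M} [ContinuousConstSMul M X] {Y : Set X}

theorem Minimal.subset_closure_orbit (hY : Minimal (IsSubsystem M) Y) {y : X} (hy : y ∈ Y) :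
    Y ⊆ closure (MulAction.orbit M y) := by
  have horbit : closure (MulAction.orbit M y) ⊆ Y :=
    closure_minimal (by rintro _ ⟨c, rfl⟩; exact hY.prop.2.2 c (smul_mem_smul_set hy))
      hY.prop.2.1
  exact (hY.eq_of_subset ⟨(MulAction.nonempty_orbit y).closure, isClosed_closure,
    fun c => smul_closure_orbit_subset c y⟩ horbit).symm.subset

theorem Minimal.exists_finset_smul_mem [CompactSpace X] (hY : Minimal (IsSubsystem M) Y)
    {U : Set X} (hU : IsOpen U) (hUY : (U ∩ Y).Nonempty) :
    ∃ I : Finset M, ∀ y ∈ Y, ∃ c ∈ I, c • y ∈ U := by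
  have hcover : Y ⊆ ⋃ c : M, (c • ·) ⁻¹' U := by
    intro y hy
    obtain ⟨z, hzU, hzY⟩ := hUY
    obtain ⟨_, hcU, c, rfl⟩ := mem_closure_iff.1 (hY.subset_closure_orbit hy hzY) U hU hzU
    exact mem_iUnion.2 ⟨c, hcU⟩
  obtain ⟨I, hI⟩ := hY.prop.2.1.isCompact.elim_finite_subcover _
    (fun c => hU.preimage (continuous_const_smul c)) hcover
  exact ⟨I, fun y hy => by simpa using hI hy⟩

end MinimalSubsystem

/-- **Topological dynamics multidimensional Brown's lemma.** Let `X` be a compact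
metric space and `T 1, …, T l` pairwise commuting homeomorphisms of `X` (given as
bijections `T i : Equiv.Perm X` that are continuous with continuous inverse).
Given `ε > 0`, there exists `q ∈ ℕ` such that for each `k ∈ ℕ` there exist a point
`x k ∈ X` and integers `u i j` with `|u i j| ≤ q`, satisfying
`d(x k, T i ^ k (T 1 ^ (u i 1) (⋯ (T l ^ (u i l) (x k)) ⋯))) < ε` for all `i`;
moreover `d(x k, x k') < ε` for all `k, k'`. -/
theorem topological_multidimensional_brown {X : Type*} [MetricSpace X] [CompactSpace X]
    [Nonempty X] (l : ℕ) (T : Fin l → Equiv.Perm X)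
    (hTcont : ∀ i, Continuous (T i)) (hTcont' : ∀ i, Continuous (T i).symm)
    (hcomm : ∀ i j, Commute (T i) (T j)) (ε : ℝ) (hε : 0 < ε) :
    ∃ q : ℕ, ∃ x : ℕ → X,
      (∀ k : ℕ, ∃ u : Fin l → Fin l → ℤ,
        (∀ i j, |u i j| ≤ (q : ℤ)) ∧
        ∀ i : Fin l,
          dist (x k) (((T i ^ (k : ℤ)) * (List.ofFn fun j => T j ^ (u i j)).prod) (x k)) < ε) ∧
      ∀ k k' : ℕ, dist (x k) (x k') < ε := by
  let P := zpowProdHom hcomm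
  let _ : MulAction (Multiplicative (Fin l → ℤ)) X := MulAction.compHom X P
  have : ContinuousConstSMul (Multiplicative (Fin l → ℤ)) X :=
    ⟨fun v => (zpowProdHom_mem hcomm (H := homeomorphSubgroup X)
      (fun i => ⟨hTcont i, hTcont' i⟩) v).1⟩
  obtain ⟨Y, hY⟩ := exists_minimal_isSubsystem (Multiplicative (Fin l → ℤ)) (X := X)
  obtain ⟨y₀, hy₀⟩ := hY.prop.1
  obtain ⟨I, hI⟩ := hY.exists_finset_smul_mem Metric.isOpen_ball
    ⟨y₀, Metric.mem_ball_self hε, hy₀⟩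
  obtain ⟨q, hq⟩ := I.exists_forall_abs_apply_le Multiplicative.toAdd
  refine ⟨q, fun _ => y₀, fun k => ?_, fun _ _ => by simpa using hε⟩
  have hreturn : ∀ i, ∃ c ∈ I, dist y₀ ((T i ^ (k : ℤ) * P c) y₀) < ε := by
    intro i
    obtain ⟨c, hcI, hc⟩ :=
      hI _ (hY.prop.2.2 (.ofAdd (Pi.single i k)) (smul_mem_smul_set hy₀))
    refine ⟨c, hcI, ?_⟩
    rw [← zpowProdHom_ofAdd_single hcomm, ← map_mul, mul_comm, map_mul]
    exact Metric.mem_ball'.1 hc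
  choose c hcI hc using hreturn
  exact ⟨fun i => (c i).toAdd, fun i j => hq _ (hcI i) j, hc⟩
end

section
/- If A ⊆ ℤⁿ is piecewise syndetic, then there exists q ∈ ℕ such that for every finite subset F ⊆ ℤⁿ and every k ∈ ℕ, there exist t ∈ ℤⁿ and, for each P ∈ F, a vector v_P ∈ Q_qⁿ, such that k·P + t + v_P ∈ A for all P ∈ F. -/
open Pointwise


/-- A subset `S ⊆ ℤⁿ` is syndetic if finitely many translates of it cover `ℤⁿ`. -/
def ZLattice.Syndetic {n : ℕ} (S : Set (Fin n → ℤ)) : Prop :=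
  ∃ K : Finset (Fin n → ℤ), ∀ u : Fin n → ℤ, ∃ k ∈ K, u + k ∈ S

/-- A subset `T ⊆ ℤⁿ` is thick if it contains a translate of every finite set. -/
def ZLattice.Thick {n : ℕ} (T : Set (Fin n → ℤ)) : Prop :=
  ∀ K : Finset (Fin n → ℤ), ∃ g : Fin n → ℤ, ∀ k ∈ K, g + k ∈ T

/-- A subset of `ℤⁿ` is piecewise syndetic if it is the intersection of a syndetic
set and a thick set. -/
def ZLattice.PiecewiseSyndetic {n : ℕ} (A : Set (Fin n → ℤ)) : Prop :=
  ∃ S T : Set (Fin n → ℤ), ZLattice.Syndetic S ∧ ZLattice.Thick T ∧ A = S ∩ T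

/-- If `A ⊆ ℤⁿ` is piecewise syndetic, then there exists `q ∈ ℕ` such that for every
finite `F ⊆ ℤⁿ` and every `k ∈ ℕ`, there exist `t ∈ ℤⁿ` and, for each `P ∈ F`, a
vector `v P` in the cube `Q_qⁿ`, such that `k • P + t + v P ∈ A` for all `P ∈ F`. -/
theorem piecewiseSyndetic_brown {n : ℕ} (A : Set (Fin n → ℤ))
    (hA : ZLattice.PiecewiseSyndetic A) :
    ∃ q : ℕ, ∀ (F : Finset (Fin n → ℤ)) (k : ℕ),
      ∃ (t : Fin n → ℤ) (v : (Fin n → ℤ) → (Fin n → ℤ)),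
        ∀ P ∈ F, (∀ j, |v P j| ≤ (q : ℤ)) ∧ (k : ℤ) • P + t + v P ∈ A := by
  obtain ⟨S, T, ⟨K, hK⟩, hT, rfl⟩ := hA
  refine ⟨K.sup fun κ => Finset.univ.sup fun j => (κ j).natAbs, fun F k => ?_⟩
  obtain ⟨g, hg⟩ := hT ((F.image fun P => (k : ℤ) • P) + K)
  choose κ hκK hκS using hK
  refine ⟨g, fun P => κ (g + (k : ℤ) • P), fun P hP => ?_⟩
  constructor
  · intro j
    rw [Int.abs_eq_natAbs]
    exact_mod_cast le_trans
      (Finset.le_sup (f := fun j => ((κ (g + (k : ℤ) • P)) j).natAbs) (Finset.mem_univ j))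
      (Finset.le_sup (f := fun κ => Finset.univ.sup fun j => (κ j).natAbs) (hκK (g + (k : ℤ) • P)))
  · have hS := hκS (g + (k : ℤ) • P)
    have hTmem : g + ((k : ℤ) • P + κ (g + (k : ℤ) • P)) ∈ T :=
      hg _ (Finset.add_mem_add (Finset.mem_image_of_mem _ hP) (hκK _))
    have he : (k : ℤ) • P + g + κ (g + (k : ℤ) • P) = g + (k : ℤ) • P + κ (g + (k : ℤ) • P) := by
      ring
    exact ⟨by rw [he]; exact hS, by rw [he, add_assoc]; exact hTmem⟩
end

section
/- Brown's lemma for ℕ: For every finite coloring of ℕ (i.e., every map c : ℕ → Fin r for some r), there exist q ∈ ℕ and a color i such that for every m ∈ ℕ there is a set {a₁ < a₂ < ⋯ < a_m} ⊆ ℕ with c(a_j) = i for all j and a_{j+1} − a_j ≤ q for all 1 ≤ j < m. -/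
/-- `gc S q m`: there is a chain of length `m` in `S` with consecutive gaps ≤ `q`. -/
private def gc (S : ℕ → Prop) (q m : ℕ) : Prop :=
  ∃ a : ℕ → ℕ, (∀ j < m, S (a j)) ∧
    ∀ j, j + 1 < m → a j < a (j + 1) ∧ a (j + 1) - a j ≤ q

private lemma gc_mono {S T : ℕ → Prop} (h : ∀ n, S n → T n) {q m : ℕ}
    (hg : gc S q m) : gc T q m := by
  obtain ⟨a, h1, h2⟩ := hg
  exact ⟨a, fun j hj => h _ (h1 j hj), h2⟩

private lemma chain_bound {a : ℕ → ℕ} {q N : ℕ}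
    (h : ∀ j, j + 1 < N → a j < a (j + 1) ∧ a (j + 1) - a j ≤ q) :
    ∀ i j, i < j → j < N → a i < a j ∧ a j - a i ≤ q * (j - i) := by
  intro i j hij hjN
  induction j with
  | zero => omega
  | succ j ih =>
    rcases Nat.lt_or_ge i j with h' | h'
    · have hj : j < N := by omega
      obtain ⟨hm, hb⟩ := ih h' hj
      obtain ⟨hm2, hb2⟩ := h j hjN
      refine ⟨by omega, ?_⟩
      have hq : q * (j + 1 - i) = q * (j - i) + q := by
        rw [show j + 1 - i = (j - i) + 1 by omega, Nat.mul_succ]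
      omega
    · have : i = j := by omega
      subst this
      obtain ⟨hm2, hb2⟩ := h i hjN
      refine ⟨hm2, ?_⟩
      have : i + 1 - i = 1 := by omega
      rw [this, mul_one]
      exact hb2

private lemma gc_split {S T : ℕ → Prop} {q : ℕ}
    (h : ∀ m, gc (fun n => S n ∨ T n) q m) :
    (∃ q', ∀ m, gc S q' m) ∨ (∃ q', ∀ m, gc T q' m) := by
  by_cases hS : ∀ m, gc S q m
  · exact Or.inl ⟨q, hS⟩
  · right
    push_neg at hS
    obtain ⟨m₀, hm₀⟩ := hS
    have hm₀pos : 0 < m₀ := by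
      rcases Nat.eq_zero_or_pos m₀ with h0 | h0
      · exfalso; apply hm₀; subst h0
        exact ⟨id, fun j hj => absurd hj (by omega), fun j hj => absurd hj (by omega)⟩
      · exact h0
    refine ⟨2 * m₀ * q, fun m => ?_⟩
    obtain ⟨a, ha1, ha2⟩ := h (m * m₀)
    have key : ∀ k, k < m → ∃ j, k * m₀ ≤ j ∧ j < k * m₀ + m₀ ∧ T (a j) := by
      intro k hk
      by_contra hc
      push_neg at hc
      apply hm₀
      have hsub : ∀ j < m₀, k * m₀ + j < m * m₀ := by
        intro j hj
        have h1 : k * m₀ + j < (k + 1) * m₀ := by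
          rw [Nat.succ_mul]; omega
        have h2 : (k + 1) * m₀ ≤ m * m₀ := Nat.mul_le_mul_right _ (by omega)
        omega
      refine ⟨fun j => a (k * m₀ + j), fun j hj => ?_, fun j hj => ?_⟩
      · rcases ha1 _ (hsub j hj) with hS' | hT'
        · exact hS'
        · exact absurd hT' (hc (k * m₀ + j) (by omega) (by omega))
      · have hlt : k * m₀ + j + 1 < m * m₀ := by
          have := hsub (j + 1) hj
          omega
        have := ha2 (k * m₀ + j) hlt
        simpa [Nat.add_assoc] using this
    choose f hf1 hf2 hf3 using key
    refine ⟨fun k => if hk : k < m then a (f k hk) else 0, fun k hk => by simp [hk, hf3], ?_⟩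
    intro k hk
    have hk1 : k < m := by omega
    simp only [dif_pos hk1, dif_pos hk]
    have hstep : (k + 1) * m₀ = k * m₀ + m₀ := by rw [Nat.succ_mul]
    have hlt : f k hk1 < f (k + 1) hk := by
      have h1 := hf2 k hk1
      have h2 := hf1 (k + 1) hk
      omega
    have hNbound : f (k + 1) hk < m * m₀ := by
      have h1 := hf2 (k + 1) hk
      have h2 : (k + 1) * m₀ + m₀ = (k + 2) * m₀ := by ring
      have h3 : (k + 2) * m₀ ≤ m * m₀ := Nat.mul_le_mul_right _ (by omega)
      omega
    obtain ⟨hmono, hbd⟩ := chain_bound ha2 _ _ hlt hNbound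
    refine ⟨hmono, ?_⟩
    have hdiff : f (k + 1) hk - f k hk1 ≤ 2 * m₀ := by
      have h1 := hf1 k hk1
      have h2 := hf2 (k + 1) hk
      omega
    calc a (f (k + 1) hk) - a (f k hk1) ≤ q * (f (k + 1) hk - f k hk1) := hbd
      _ ≤ q * (2 * m₀) := Nat.mul_le_mul_left _ hdiff
      _ = 2 * m₀ * q := by ring

private lemma main_aux {r : ℕ} (c : ℕ → Fin r) (F : Finset (Fin r)) :
    ∀ S : ℕ → Prop, (∀ n, S n → c n ∈ F) → ∀ q, (∀ m, gc S q m) →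
    ∃ i q', ∀ m, gc (fun n => c n = i) q' m := by
  induction F using Finset.induction with
  | empty =>
    intro S hS q hq
    obtain ⟨a, h1, _⟩ := hq 1
    exact absurd (hS _ (h1 0 one_pos)) (by simp)
  | @insert i₀ F hni ih =>
    intro S hS q hq
    have hu : ∀ m, gc (fun n => (S n ∧ c n = i₀) ∨ (S n ∧ c n ∈ F)) q m := by
      intro m
      refine gc_mono (fun n hn => ?_) (hq m)
      rcases Finset.mem_insert.mp (hS n hn) with h | h
      · exact Or.inl ⟨hn, h⟩
      · exact Or.inr ⟨hn, h⟩
    rcases gc_split hu with ⟨q', h'⟩ | ⟨q', h'⟩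
    · exact ⟨i₀, q', fun m => gc_mono (fun n hn => hn.2) (h' m)⟩
    · exact ih _ (fun n hn => hn.2) q' h'

/-- **Brown's lemma for ℕ.** For every finite coloring `c : ℕ → Fin r`, there exist
`q ∈ ℕ` and a color `i` such that for every `m ∈ ℕ` there is a strictly increasing
family `a₁ < a₂ < ⋯ < a_m` of natural numbers, all of color `i`, with consecutive
gaps at most `q`. -/
theorem brown_lemma_nat (r : ℕ) (c : ℕ → Fin r) :
    ∃ (q : ℕ) (i : Fin r),
      ∀ m : ℕ, ∃ a : Fin m → ℕ,
        StrictMono a ∧ (∀ j, c (a j) = i) ∧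
        ∀ (j : ℕ) (h : j + 1 < m), a ⟨j + 1, h⟩ - a ⟨j, Nat.lt_of_succ_lt h⟩ ≤ q := by
  obtain ⟨i, q', hq'⟩ := main_aux c Finset.univ (fun _ => True) (fun n _ => Finset.mem_univ _)
    1 (fun m => ⟨id, fun j _ => trivial, fun j _ => ⟨by simp only [id]; omega, by simp only [id]; omega⟩⟩)
  refine ⟨q', i, fun m => ?_⟩
  obtain ⟨a, h1, h2⟩ := hq' m
  refine ⟨fun j => a j.val, ?_, fun j => h1 j.val j.isLt, fun j h => (h2 j h).2⟩
  intro j k hjk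
  exact (chain_bound h2 j.val k.val hjk k.isLt).1
end

section
/- Let F : 𝓗 → [0,1] be defined by F(g) = max{1 − d̃_𝓗(Id, g), 0} and set d_𝓗(g,h) = sup_{f ∈ 𝓗} |F(gf) − F(hf)|. Then d_𝓗 is a right-invariant metric on 𝓗 which is topologically equivalent to d̃_𝓗 (the two metrics induce the same topology on 𝓗). -/
/-- A homothetic transformation `v ↦ λ • v + t` of `ℝⁿ`, recorded by its scale
factor `λ > 0` and translation part `t`. -/
structure Homothety (n : ℕ) where
  scale : ℝ
  trans : EuclideanSpace ℝ (Fin n)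
  scale_pos : 0 < scale

namespace Homothety

variable {n : ℕ}

theorem ext' {a b : Homothety n} (h1 : a.scale = b.scale) (h2 : a.trans = b.trans) :
    a = b := by
  cases a; cases b; simp_all

/-- Composition of homotheties: `(λ, t) * (μ, s) = (λμ, λ • s + t)`. -/
noncomputable instance : Mul (Homothety n) :=
  ⟨fun a b => ⟨a.scale * b.scale, a.scale • b.trans + a.trans,
    mul_pos a.scale_pos b.scale_pos⟩⟩

/-- The identity homothety `(1, 0)`. -/
instance : One (Homothety n) := ⟨⟨1, 0, one_pos⟩⟩

/-- The inverse homothety `(λ, t)⁻¹ = (λ⁻¹, −λ⁻¹ • t)`. -/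
noncomputable instance : Inv (Homothety n) := ⟨fun a => ⟨a.scale⁻¹, -(a.scale⁻¹ • a.trans),
  inv_pos.mpr a.scale_pos⟩⟩

@[simp] theorem mul_scale (a b : Homothety n) : (a * b).scale = a.scale * b.scale := rfl
@[simp] theorem mul_trans (a b : Homothety n) :
    (a * b).trans = a.scale • b.trans + a.trans := rfl
@[simp] theorem one_scale : (1 : Homothety n).scale = 1 := rfl
@[simp] theorem one_trans : (1 : Homothety n).trans = 0 := rfl
@[simp] theorem inv_scale (a : Homothety n) : a⁻¹.scale = a.scale⁻¹ := rfl
@[simp] theorem inv_trans (a : Homothety n) : a⁻¹.trans = -(a.scale⁻¹ • a.trans) := rfl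

/-- The group `𝓗` of homothetic transformations of `ℝⁿ` under composition. -/
noncomputable instance : Group (Homothety n) where
  mul_assoc a b c := ext' (mul_assoc _ _ _) (by simp [mul_smul, smul_add, add_assoc])
  one_mul a := ext' (one_mul _) (by simp)
  mul_one a := ext' (mul_one _) (by simp)
  inv_mul_cancel a := ext' (inv_mul_cancel₀ a.scale_pos.ne')
    (by simp [smul_smul, inv_mul_cancel₀ a.scale_pos.ne'])

/-- The standard action of a homothety on `ℝⁿ`: `g • v = λ • v + t`. -/
noncomputable def act (g : Homothety n) (v : EuclideanSpace ℝ (Fin n)) :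
    EuclideanSpace ℝ (Fin n) :=
  g.scale • v + g.trans

/-- The distance `d̃_𝓗(g, h) = max {|ln(λ/μ)|, ‖t − s‖}` on `𝓗`. -/
noncomputable def tdist (g h : Homothety n) : ℝ :=
  max |Real.log (g.scale / h.scale)| ‖g.trans - h.trans‖

end Homothety

namespace Homothety

/-- The auxiliary function `F(g) = max {1 − d̃_𝓗(Id, g), 0}`. -/
noncomputable def auxF (g : Homothety n) : ℝ :=
  max (1 - tdist 1 g) 0

/-- The distance `d_𝓗(g, h) = sup_{f ∈ 𝓗} |F(gf) − F(hf)|`. -/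
noncomputable def rdist (g h : Homothety n) : ℝ :=
  sSup (Set.range fun f : Homothety n => |auxF (g * f) - auxF (h * f)|)

end Homothety


/-! The distance `rdist` is the sup-distance between the functions `f ↦ F (g * f)` and
`f ↦ F (h * f)` for the bounded function `F = auxF`, which makes it a right-invariant pseudometric
on any group. In the coordinates `g ↦ (log λ, t)` the distance `tdist` is the sup metric of
`ℝ × ℝⁿ`, so `(𝓗, tdist)` is a proper metric space and a topological group, on which
`F = max (1 - dist 1 ·) 0` is continuous with compact support. By compactness of the support,
`|F f - F (k * f)|` is small uniformly in `f` once `k` is close to `1`, so `rdist 1 k → 0` as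
`k → 1`. Conversely the term `f = g⁻¹` gives `min (tdist 1 (h * g⁻¹)) 1 ≤ rdist g h`, which yields
both separation and the continuity of the identity `(𝓗, rdist) → (𝓗, tdist)`. -/

open Filter Topology

section TranslateDist

variable {G : Type*} [Group G]

noncomputable def translateDist (F : G → ℝ) (g h : G) : ℝ :=
  ⨆ f, |F (g * f) - F (h * f)|

variable (F : G → ℝ)

theorem translateDist_self (g : G) : translateDist F g g = 0 := by
  simp [translateDist]

theorem translateDist_nonneg (g h : G) : 0 ≤ translateDist F g h :=
  Real.iSup_nonneg fun _ => abs_nonneg _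

theorem translateDist_comm (g h : G) : translateDist F g h = translateDist F h g := by
  simp only [translateDist, abs_sub_comm]

theorem translateDist_mul_right (g h k : G) :
    translateDist F (g * k) (h * k) = translateDist F g h := by
  simp only [translateDist, mul_assoc]
  exact (Equiv.mulLeft k).surjective.iSup_comp fun f => |F (g * f) - F (h * f)|

variable {F}

theorem translateDist_le {g h : G} {c : ℝ} (H : ∀ f, |F (g * f) - F (h * f)| ≤ c) :
    translateDist F g h ≤ c :=
  ciSup_le H

theorem abs_sub_le_translateDist {M : ℝ} (hF : ∀ x, |F x| ≤ M) (g h f : G) :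
    |F (g * f) - F (h * f)| ≤ translateDist F g h := by
  refine le_ciSup (f := fun f => |F (g * f) - F (h * f)|) ⟨M + M, ?_⟩ f
  rintro _ ⟨f, rfl⟩
  exact (abs_sub _ _).trans (add_le_add (hF _) (hF _))

theorem translateDist_triangle {M : ℝ} (hF : ∀ x, |F x| ≤ M) (g h k : G) :
    translateDist F g k ≤ translateDist F g h + translateDist F h k :=
  translateDist_le fun f => (abs_sub_le _ _ _).trans <|
    add_le_add (abs_sub_le_translateDist hF g h f) (abs_sub_le_translateDist hF h k f)

theorem tendsto_translateDist_one [TopologicalSpace G] [IsTopologicalGroup G]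
    (hF : Continuous F) (hFc : HasCompactSupport F) :
    Tendsto (translateDist F 1) (𝓝 1) (𝓝 0) := by
  have small : ∀ ε > 0, ∀ᶠ k in 𝓝 (1 : G), ∀ f ∈ tsupport F, |F (k * f) - F f| < ε := by
    intro ε hε
    refine hFc.isCompact.eventually_forall_of_forall_eventually fun f _ => ?_
    have hcont : Continuous fun p : G × G => |F (p.1 * p.2) - F p.2| := by fun_prop
    exact (hcont.tendsto (1, f)).eventually (gt_mem_nhds (by simpa using hε))
  rw [Metric.tendsto_nhds]
  intro ε hε
  have hinv : Tendsto (fun k : G => k⁻¹) (𝓝 1) (𝓝 1) := by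
    simpa using (continuous_inv.tendsto (1 : G))
  filter_upwards [small (ε / 2) (half_pos hε), hinv.eventually (small (ε / 2) (half_pos hε))]
    with k hk hk'
  have bound : translateDist F 1 k ≤ ε / 2 := by
    refine translateDist_le fun f => ?_
    rw [one_mul]
    by_cases hf : f ∈ tsupport F
    · rw [abs_sub_comm]; exact (hk f hf).le
    -- otherwise `f = k⁻¹ * (k * f)`, with `k * f` in the support
    by_cases hkf : k * f ∈ tsupport F
    · simpa using (hk' _ hkf).le
    simp only [image_eq_zero_of_notMem_tsupport hf, image_eq_zero_of_notMem_tsupport hkf,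
      sub_zero, abs_zero]
    positivity
  rw [Real.dist_0_eq_abs, abs_of_nonneg (translateDist_nonneg F 1 k)]
  linarith

end TranslateDist

namespace Homothety

variable {n : ℕ}

noncomputable def logCoords : Homothety n ≃ ℝ × EuclideanSpace ℝ (Fin n) where
  toFun g := (Real.log g.scale, g.trans)
  invFun p := ⟨Real.exp p.1, p.2, Real.exp_pos _⟩
  left_inv g := ext' (Real.exp_log g.scale_pos) rfl
  right_inv _ := Prod.ext (Real.log_exp _) rfl

noncomputable instance : MetricSpace (Homothety n) :=
  MetricSpace.induced logCoords logCoords.injective inferInstance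

theorem dist_eq_tdist (g h : Homothety n) : dist g h = tdist g h := by
  change dist (logCoords g) (logCoords h) = _
  rw [Prod.dist_eq, tdist, Real.dist_eq, dist_eq_norm,
    Real.log_div g.scale_pos.ne' h.scale_pos.ne']
  rfl

noncomputable def logCoordsIsometry : Homothety n ≃ᵢ ℝ × EuclideanSpace ℝ (Fin n) :=
  ⟨logCoords, Isometry.of_dist_eq fun _ _ => rfl⟩

instance : ProperSpace (Homothety n) where
  isCompact_closedBall g r := by
    simpa using (isCompact_closedBall (logCoordsIsometry g) r).image
      logCoordsIsometry.symm.continuous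

theorem logCoords_mul (g h : Homothety n) :
    logCoords (g * h) = ((logCoords g).1 + (logCoords h).1,
      Real.exp (logCoords g).1 • (logCoords h).2 + (logCoords g).2) := by
  simp [logCoords, Real.log_mul g.scale_pos.ne' h.scale_pos.ne', Real.exp_log g.scale_pos]

theorem logCoords_inv (g : Homothety n) :
    logCoords g⁻¹ = (-(logCoords g).1, -(Real.exp (-(logCoords g).1) • (logCoords g).2)) := by
  simp [logCoords, Real.log_inv, Real.exp_neg, Real.exp_log g.scale_pos]

theorem continuous_logCoords : Continuous (logCoords : Homothety n → _) :=
  logCoordsIsometry.continuous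

instance : IsTopologicalGroup (Homothety n) where
  continuous_mul := by
    rw [← logCoordsIsometry.toHomeomorph.comp_continuous_iff]
    change Continuous fun p : Homothety n × Homothety n => logCoords (p.1 * p.2)
    simp only [logCoords_mul]
    have hcoords : Continuous fun q : (ℝ × EuclideanSpace ℝ (Fin n)) × (ℝ × _) =>
        (q.1.1 + q.2.1, Real.exp q.1.1 • q.2.2 + q.1.2) := by fun_prop
    exact hcoords.comp (continuous_logCoords.prodMap continuous_logCoords)
  continuous_inv := by
    rw [← logCoordsIsometry.toHomeomorph.comp_continuous_iff]
    change Continuous fun g : Homothety n => logCoords g⁻¹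
    simp only [logCoords_inv]
    have hcoords : Continuous fun q : ℝ × EuclideanSpace ℝ (Fin n) =>
        (-q.1, -(Real.exp (-q.1) • q.2)) := by fun_prop
    exact hcoords.comp continuous_logCoords

theorem auxF_eq (g : Homothety n) : auxF g = max (1 - dist 1 g) 0 := by
  rw [dist_eq_tdist, auxF]

theorem auxF_one : auxF (1 : Homothety n) = 1 := by
  simp [auxF_eq]

theorem one_sub_auxF (g : Homothety n) : 1 - auxF g = min (dist 1 g) 1 := by
  rw [auxF_eq, ← min_sub_sub_left, sub_sub_cancel, sub_zero]

theorem abs_auxF_le_one (g : Homothety n) : |auxF g| ≤ 1 := by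
  rw [auxF_eq, abs_of_nonneg (le_max_right _ _)]
  exact max_le (by linarith [dist_nonneg (x := 1) (y := g)]) zero_le_one

theorem continuous_auxF : Continuous (auxF : Homothety n → ℝ) := by
  simp only [funext auxF_eq]
  fun_prop

theorem hasCompactSupport_auxF : HasCompactSupport (auxF : Homothety n → ℝ) :=
  HasCompactSupport.intro (isCompact_closedBall 1 1) fun g hg => by
    rw [Metric.mem_closedBall, not_le, dist_comm] at hg
    rw [auxF_eq]
    exact max_eq_right (by linarith)

theorem rdist_eq_translateDist (g h : Homothety n) : rdist g h = translateDist auxF g h := rfl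

theorem min_dist_le_rdist (g h : Homothety n) : min (dist 1 (h * g⁻¹)) 1 ≤ rdist g h := by
  have key := abs_sub_le_translateDist abs_auxF_le_one g h g⁻¹
  rw [mul_inv_cancel, auxF_one] at key
  rw [← one_sub_auxF]
  exact (le_abs_self _).trans key

theorem eq_of_rdist_eq_zero {g h : Homothety n} (hgh : rdist g h = 0) : g = h := by
  have hmin := min_dist_le_rdist g h
  rw [hgh, min_le_iff] at hmin
  have hdist : dist 1 (h * g⁻¹) = 0 :=
    le_antisymm (hmin.resolve_right (by norm_num)) dist_nonneg
  exact (mul_inv_eq_one.mp (dist_eq_zero.mp hdist).symm).symm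

theorem tendsto_rdist_nhds (g : Homothety n) : Tendsto (rdist g) (𝓝 g) (𝓝 0) := by
  have hcomp : rdist g = translateDist auxF 1 ∘ (· * g⁻¹) := funext fun h => by
    rw [Function.comp_apply, rdist_eq_translateDist, ← translateDist_mul_right auxF g h g⁻¹,
      mul_inv_cancel]
  rw [hcomp]
  refine (tendsto_translateDist_one continuous_auxF hasCompactSupport_auxF).comp ?_
  simpa using (continuous_mul_const g⁻¹).tendsto g

theorem exists_pos_dist_lt_of_rdist_lt (g : Homothety n) {ε : ℝ} (hε : 0 < ε) :
    ∃ δ > 0, ∀ h, rdist g h < δ → dist h g < ε := by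
  obtain ⟨δ, hδ, hmul⟩ := Metric.continuousAt_iff.mp (continuous_mul_const g).continuousAt ε hε
  refine ⟨min δ 1, lt_min hδ one_pos, fun h hh => ?_⟩
  obtain ⟨hltδ, hlt1⟩ := lt_min_iff.mp ((min_dist_le_rdist g h).trans_lt hh)
  rw [min_eq_left ((min_lt_iff.mp hlt1).resolve_right (lt_irrefl 1)).le] at hltδ
  have hclose := hmul (x := h * g⁻¹) (by rwa [dist_comm] at hltδ)
  rwa [inv_mul_cancel_right, one_mul] at hclose

end Homothety

open Homothety in
/-- `d_𝓗` is a right-invariant metric on `𝓗` which is topologically equivalent to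
`d̃_𝓗` (the two metrics induce the same topology on `𝓗`). -/
theorem homothety_rdist_rightInvariant_metric_equiv (n : ℕ) :
    (∀ g : Homothety n, rdist g g = 0) ∧
    (∀ g h : Homothety n, 0 ≤ rdist g h) ∧
    (∀ g h : Homothety n, rdist g h = rdist h g) ∧
    (∀ g h : Homothety n, rdist g h = 0 → g = h) ∧
    (∀ g h k : Homothety n, rdist g k ≤ rdist g h + rdist h k) ∧
    -- right invariance
    (∀ f g h : Homothety n, rdist (f * g) (h * g) = rdist f h) ∧
    -- the identity map `(𝓗, d̃_𝓗) → (𝓗, d_𝓗)` is continuous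
    (∀ (g : Homothety n) (ε : ℝ), 0 < ε → ∃ δ : ℝ, 0 < δ ∧
      ∀ h : Homothety n, tdist g h < δ → rdist g h < ε) ∧
    -- the identity map `(𝓗, d_𝓗) → (𝓗, d̃_𝓗)` is continuous
    (∀ (g : Homothety n) (ε : ℝ), 0 < ε → ∃ δ : ℝ, 0 < δ ∧
      ∀ h : Homothety n, rdist g h < δ → tdist g h < ε) := by
  refine ⟨translateDist_self auxF, translateDist_nonneg auxF, translateDist_comm auxF,
    fun g h => eq_of_rdist_eq_zero, translateDist_triangle abs_auxF_le_one,
    fun f g h => translateDist_mul_right auxF f h g, fun g ε hε => ?_, fun g ε hε => ?_⟩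
  · obtain ⟨δ, hδ, hball⟩ := Metric.tendsto_nhds_nhds.mp (tendsto_rdist_nhds g) ε hε
    refine ⟨δ, hδ, fun h hh => ?_⟩
    have hlt := hball (by rwa [dist_comm, dist_eq_tdist] : dist h g < δ)
    rwa [Real.dist_0_eq_abs, rdist_eq_translateDist,
      abs_of_nonneg (translateDist_nonneg auxF g h)] at hlt
  · obtain ⟨δ, hδ, hball⟩ := exists_pos_dist_lt_of_rdist_lt g hε
    exact ⟨δ, hδ, fun h hh => by rw [← dist_eq_tdist, dist_comm]; exact hball h hh⟩
end
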